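/- arXiv:2401.10818 — 2 statements merged into one kernel-verified Lean document; each statement's English description precedes it below -/
import Mathlib

section
/- Let α > 0, λ > 0, and let n ≥ 1 be an integer. Let m ≥ 2 be an integer with m ≤ (2λn)^{−1/α}. Then for the clique infection chain on {0,…,n} started at X₀ = 1, the probability that the chain reaches the state m before reaching the state 0 is at most 2^{1−m}. -/
open scoped ENNReal
open Filter Asymptotics

noncomputable def markovDist {S : Type*} [DecidableEq S] (step : S → S → ℝ≥0∞) (s0 : S) :
    ℕ → S → ℝ≥0∞
  | 0 => fun J => if J = s0 then 1 else 0
  | t + 1 => fun J => ∑' s : S, markovDist step s0 t s * step s J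

open Classical in
noncomputable def absorbStep {S : Type*} (A : Set S) (step : S → S → ℝ≥0∞) :
    S → S → ℝ≥0∞ :=
  fun s => if s ∈ A then (fun J => if J = s then 1 else 0) else step s

noncomputable def hitProb {S : Type*} [DecidableEq S] (step : S → S → ℝ≥0∞) (s0 : S)
    (A : Set S) : ℝ≥0∞ :=
  ⨆ t : ℕ, ∑' s : S, A.indicator (markovDist (absorbStep A step) s0 t) s

noncomputable def cliqueStep (n : ℕ) (lam alpha : ℝ) (I : ℕ) : ℕ → ℝ≥0∞ :=
  if I = 0 ∨ n < I then fun J => if J = I then 1 else 0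
  else fun J =>
    if J = I + 1 then
      ENNReal.ofReal (lam * (I : ℝ) ^ (1 + alpha) * ((n : ℝ) - I) /
        (lam * (I : ℝ) ^ (1 + alpha) * ((n : ℝ) - I) + I))
    else if J = I - 1 then
      ENNReal.ofReal ((I : ℝ) /
        (lam * (I : ℝ) ^ (1 + alpha) * ((n : ℝ) - I) + I))
    else 0

noncomputable def cliqueDist (n : ℕ) (lam alpha : ℝ) (x0 : ℕ) : ℕ → ℕ → ℝ≥0∞ :=
  markovDist (cliqueStep n lam alpha) x0

noncomputable def cliqueET (n : ℕ) (lam alpha : ℝ) (x0 : ℕ) : ℝ≥0∞ :=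
  ∑' t : ℕ, (1 - cliqueDist n lam alpha x0 t 0)

/-!
The weight `g I = 2 ^ min I m` is superharmonic for the chain stopped at `m`. Below `m` the
condition `m ≤ (2λn)^(-1/α)` gives `2 b(I) ≤ I`, so the chain steps up with probability at most
`1/3`, and `(1/3) 2^(I+1) + (2/3) 2^(I-1) = 2^I`; at and above `m` the weight is constant. Hence
`P(X_t = m) 2^m ≤ E g(X_t) ≤ g 1 = 2` for every `t`.
-/

section Markov

variable {S : Type*} [DecidableEq S]

def Superharmonic (step : S → S → ℝ≥0∞) (g : S → ℝ≥0∞) : Prop :=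
  ∀ s, ∑' J, step s J * g J ≤ g s

theorem tsum_markovDist_mul_le {step : S → S → ℝ≥0∞} {g : S → ℝ≥0∞}
    (hg : Superharmonic step g) (s0 : S) (t : ℕ) :
    ∑' s, markovDist step s0 t s * g s ≤ g s0 := by
  induction t with
  | zero => simp [markovDist]
  | succ t ih =>
    calc ∑' J, markovDist step s0 (t + 1) J * g J
        = ∑' s, markovDist step s0 t s * ∑' J, step s J * g J := by
          simp only [markovDist, ← ENNReal.tsum_mul_right, ← ENNReal.tsum_mul_left, mul_assoc]
          exact ENNReal.tsum_comm
      _ ≤ ∑' s, markovDist step s0 t s * g s :=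
          ENNReal.tsum_le_tsum fun s => mul_le_mul_right (hg s) _
      _ ≤ g s0 := ih

theorem superharmonic_absorbStep {step : S → S → ℝ≥0∞} {g : S → ℝ≥0∞} {A : Set S}
    (hg : ∀ s ∉ A, ∑' J, step s J * g J ≤ g s) : Superharmonic (absorbStep A step) g := by
  intro s
  by_cases hs : s ∈ A
  · simp [absorbStep, hs]
  · simpa [absorbStep, hs] using hg s hs

theorem hitProb_mul_le {step : S → S → ℝ≥0∞} {g : S → ℝ≥0∞} {A : Set S} {c : ℝ≥0∞}
    (hg : Superharmonic (absorbStep A step) g) (hc : ∀ a ∈ A, c ≤ g a) (s0 : S) :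
    hitProb step s0 A * c ≤ g s0 := by
  rw [hitProb, ENNReal.iSup_mul]
  refine iSup_le fun t => ?_
  calc (∑' s, A.indicator (markovDist (absorbStep A step) s0 t) s) * c
      = ∑' s, A.indicator (markovDist (absorbStep A step) s0 t) s * c :=
        ENNReal.tsum_mul_right.symm
    _ ≤ ∑' s, markovDist (absorbStep A step) s0 t s * g s := by
        refine ENNReal.tsum_le_tsum fun s => ?_
        by_cases hs : s ∈ A
        · simpa [hs] using mul_le_mul_right (hc s hs) _
        · simp [hs]
    _ ≤ g s0 := tsum_markovDist_mul_le hg s0 t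

end Markov

theorem tsum_ite_eq_ite_eq_mul {p q : ℝ≥0∞} {a b : ℕ} (hab : a ≠ b) (f : ℕ → ℝ≥0∞) :
    ∑' J, (if J = a then p else if J = b then q else 0) * f J = p * f a + q * f b := by
  have hsplit : ∀ J, (if J = a then p else if J = b then q else 0) * f J
      = (if J = a then p * f a else 0) + (if J = b then q * f b else 0) := by
    intro J
    by_cases ha : J = a
    · subst ha; simp [hab]
    · by_cases hb : J = b
      · subst hb; simp [ha]
      · simp [ha, hb]
  rw [tsum_congr hsplit, ENNReal.tsum_add, tsum_ite_eq, tsum_ite_eq]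

theorem ofReal_div_add_ofReal_div {x y : ℝ} (hx : 0 ≤ x) (hy : 0 < y) :
    ENNReal.ofReal (x / (x + y)) + ENNReal.ofReal (y / (x + y)) = 1 := by
  rw [← ENNReal.ofReal_add (by positivity) (by positivity), ← add_div,
    div_self (by positivity), ENNReal.ofReal_one]

theorem ofReal_div_mul_two_pow_add_le {x y : ℝ} (hx : 0 ≤ x) (hy : 0 < y) (hxy : 2 * x ≤ y)
    (k : ℕ) :
    ENNReal.ofReal (x / (x + y)) * 2 ^ (k + 2) + ENNReal.ofReal (y / (x + y)) * 2 ^ k ≤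
      2 ^ (k + 1) := by
  have hpow : ∀ j : ℕ, (2 : ℝ≥0∞) ^ j = ENNReal.ofReal (2 ^ j) := fun j => by
    rw [ENNReal.ofReal_pow zero_le_two, ENNReal.ofReal_ofNat]
  simp only [hpow, ← ENNReal.ofReal_mul (div_nonneg hx (by positivity : (0 : ℝ) ≤ x + y)),
    ← ENNReal.ofReal_mul (div_nonneg hy.le (by positivity : (0 : ℝ) ≤ x + y))]
  rw [← ENNReal.ofReal_add (by positivity) (by positivity)]
  refine ENNReal.ofReal_le_ofReal ?_
  rw [div_mul_eq_mul_div, div_mul_eq_mul_div, ← add_div, div_le_iff₀ (by positivity)]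
  have h2k : (0 : ℝ) < 2 ^ k := by positivity
  simp only [pow_succ]
  nlinarith

theorem mul_rpow_le_one_of_le_rpow_neg_one_div {c x α : ℝ} (hc : 0 < c) (hα : 0 < α)
    (hx : 0 ≤ x) (hxc : x ≤ c ^ (-1 / α)) : c * x ^ α ≤ 1 := by
  have hxα : x ^ α ≤ c⁻¹ := by
    calc x ^ α ≤ (c ^ (-1 / α)) ^ α := Real.rpow_le_rpow hx hxc hα.le
      _ = c⁻¹ := by rw [← Real.rpow_mul hc.le, div_mul_cancel₀ _ hα.ne', Real.rpow_neg_one]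
  calc c * x ^ α ≤ c * c⁻¹ := mul_le_mul_of_nonneg_left hxα hc.le
    _ = 1 := mul_inv_cancel₀ hc.ne'

section Clique

variable {n m I : ℕ} {lam alpha : ℝ}

noncomputable def cliqueBirth (n : ℕ) (lam alpha : ℝ) (I : ℕ) : ℝ :=
  lam * (I : ℝ) ^ (1 + alpha) * ((n : ℝ) - I)

theorem cliqueBirth_nonneg (hlam : 0 ≤ lam) (hIn : I ≤ n) : 0 ≤ cliqueBirth n lam alpha I :=
  mul_nonneg (mul_nonneg hlam (Real.rpow_nonneg I.cast_nonneg _))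
    (sub_nonneg.mpr (by exact_mod_cast hIn))

theorem two_mul_cliqueBirth_le (hlam : 0 < lam) (ha : 0 < alpha)
    (hmle : (m : ℝ) ≤ (2 * lam * n) ^ (-1 / alpha)) (hI : 0 < I) (hIn : I ≤ n) (hIm : I ≤ m) :
    2 * cliqueBirth n lam alpha I ≤ I := by
  have hI' : (0 : ℝ) < I := by exact_mod_cast hI
  have hIn' : (I : ℝ) ≤ n := by exact_mod_cast hIn
  have hIm' : (I : ℝ) ≤ m := by exact_mod_cast hIm
  have hc : (0 : ℝ) < 2 * lam * n := by
    have : (0 : ℝ) < n := hI'.trans_le hIn'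
    positivity
  have hm_small := mul_rpow_le_one_of_le_rpow_neg_one_div hc ha (by positivity) hmle
  have hIα : (I : ℝ) ^ alpha ≤ (m : ℝ) ^ alpha := Real.rpow_le_rpow hI'.le hIm' ha.le
  calc 2 * cliqueBirth n lam alpha I
      = 2 * lam * I * I ^ alpha * (n - I) := by
        rw [cliqueBirth, Real.rpow_add hI', Real.rpow_one]; ring
    _ ≤ 2 * lam * I * m ^ alpha * n := by
        gcongr
        linarith
    _ = I * (2 * lam * n * m ^ alpha) := by ring
    _ ≤ I := mul_le_of_le_one_right hI'.le hm_small

theorem tsum_cliqueStep_mul (hI : 0 < I) (hIn : I ≤ n) (g : ℕ → ℝ≥0∞) :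
    ∑' J, cliqueStep n lam alpha I J * g J =
      ENNReal.ofReal (cliqueBirth n lam alpha I / (cliqueBirth n lam alpha I + I)) * g (I + 1) +
        ENNReal.ofReal (I / (cliqueBirth n lam alpha I + I)) * g (I - 1) := by
  rw [cliqueStep, if_neg (by omega)]
  exact tsum_ite_eq_ite_eq_mul (by omega) g

theorem superharmonic_cliqueStep (hlam : 0 < lam) (ha : 0 < alpha)
    (hmle : (m : ℝ) ≤ (2 * lam * n) ^ (-1 / alpha)) :
    Superharmonic (absorbStep {m} (cliqueStep n lam alpha)) fun I => 2 ^ min I m := by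
  refine superharmonic_absorbStep fun s hs => ?_
  rw [Set.mem_singleton_iff] at hs
  by_cases hfix : s = 0 ∨ n < s
  · simp [cliqueStep, hfix]
  have hs0 : 0 < s := by omega
  have hsn : s ≤ n := by omega
  have hb := cliqueBirth_nonneg (alpha := alpha) hlam.le hsn
  have hs' : (0 : ℝ) < s := by exact_mod_cast hs0
  rw [tsum_cliqueStep_mul hs0 hsn]
  rcases Nat.lt_or_gt_of_ne hs with hlt | hgt
  · obtain ⟨k, rfl⟩ : ∃ k, s = k + 1 := ⟨s - 1, by omega⟩
    rw [min_eq_left (by omega), min_eq_left (by omega), min_eq_left (by omega),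
      Nat.add_sub_cancel, add_assoc]
    exact ofReal_div_mul_two_pow_add_le hb hs'
      (two_mul_cliqueBirth_le hlam ha hmle hs0 hsn hlt.le) k
  · rw [min_eq_right (by omega), min_eq_right (by omega), min_eq_right (by omega), ← add_mul,
      ofReal_div_add_ofReal_div hb hs', one_mul]

end Clique

theorem clique_superlinear_reach_upper_general (n m : ℕ) (lam alpha : ℝ)
    (hlam : 0 < lam) (ha : 0 < alpha)
    (hmle : (m : ℝ) ≤ (2 * lam * n) ^ (-1 / alpha)) :
    hitProb (cliqueStep n lam alpha) 1 {m} ≤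
      ENNReal.ofReal ((2 : ℝ) ^ ((1 : ℝ) - m)) := by
  have hbound : hitProb (cliqueStep n lam alpha) 1 {m} * 2 ^ m ≤ 2 ^ 1 :=
    (hitProb_mul_le (superharmonic_cliqueStep hlam ha hmle) (by simp) 1).trans
      (pow_le_pow_right₀ one_le_two (min_le_left 1 m))
  have htarget : ENNReal.ofReal ((2 : ℝ) ^ ((1 : ℝ) - m)) = 2 / 2 ^ m := by
    rw [Real.rpow_sub two_pos, Real.rpow_one, Real.rpow_natCast,
      ENNReal.ofReal_div_of_pos (by positivity), ENNReal.ofReal_pow zero_le_two,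
      ENNReal.ofReal_ofNat]
  rw [htarget, ENNReal.le_div_iff_mul_le (by simp) (by simp)]
  simpa using hbound

/-- For super-linear scaling, the probability that the clique infection
chain started at 1 reaches m ≤ (2λn)^{-1/α} before 0 is at most 2^{1-m}. -/
theorem clique_superlinear_reach_upper (n m : ℕ) (lam alpha : ℝ)
    (hn : 1 ≤ n) (hm : 2 ≤ m) (hlam : 0 < lam) (ha : 0 < alpha)
    (hmle : (m : ℝ) ≤ (2 * lam * n) ^ (-1 / alpha)) :
    hitProb (cliqueStep n lam alpha) 1 {m} ≤
      ENNReal.ofReal ((2 : ℝ) ^ ((1 : ℝ) - m)) :=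
  clique_superlinear_reach_upper_general n m lam alpha hlam ha hmle
end

section
/- Let α > 0 be fixed and let λ : ℕ → ℝ_{>0} satisfy λ(n)·n^{1+α} → 0 as n → ∞ (i.e. λ ∈ o(n^{−1−α})). For each n, let T_n be the survival time of the clique infection chain on {0,…,n} with parameters λ(n), α, started at X₀ = 1. Then E[T_n] is bounded above by a constant independent of n. -/
/-!
Let `u I` be the expected time for the chain to step from `I` down to `I - 1`. First-step
analysis gives `I * u I = b I + I + b I * u (I + 1)` with `u (n + 1) = 0`, and then
`W J = u 1 + ⋯ + u J` satisfies `W I = 1 + (b I * W (I + 1) + I * W (I - 1)) / (b I + I)`.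
So `𝔼 W (X t)` drops by at least `ℙ(T > t)` at every step, whence `𝔼 T ≤ W 1 = u 1`.
Once `λ n ^ (1 + α) ≤ 1 / 2` we have `b I ≤ I / 2`, and downward induction gives `u I ≤ 3`;
the finitely many smaller `n` contribute finitely many finite values.
-/

open scoped ENNReal
open Filter Asymptotics

theorem hasSum_ite_ite_eq {α β : Type*} [AddCommMonoid α] [TopologicalSpace α] [ContinuousAdd α]
    [DecidableEq β] {a b : β} (hab : a ≠ b) (A B : α) :
    HasSum (fun x => if x = a then A else if x = b then B else 0) (A + B) := by
  convert (hasSum_ite_eq a A).add (hasSum_ite_eq b B) using 1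
  funext x
  by_cases hxa : x = a
  · simp [hxa, hab]
  · simp [hxa]

section Markov

variable {S : Type*} [DecidableEq S] {step : S → S → ℝ≥0∞}

theorem markovDist_succ_apply (s0 : S) (t : ℕ) (J : S) :
    markovDist step s0 (t + 1) J = ∑' s, markovDist step s0 t s * step s J := rfl

theorem tsum_markovDist_eq_one (hstep : ∀ s, ∑' J, step s J = 1) (s0 : S) (t : ℕ) :
    ∑' s, markovDist step s0 t s = 1 := by
  induction t with
  | zero => simp [markovDist]
  | succ t ih =>
    simp_rw [markovDist_succ_apply]
    rw [ENNReal.tsum_comm]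
    simp_rw [ENNReal.tsum_mul_left, hstep, mul_one, ih]

theorem tsum_indicator_markovDist_le_of_drift {A : Set S} {V : S → ℝ≥0∞}
    (hA : ∀ s ∈ A, ∑' J, step s J * V J ≤ V s)
    (hAc : ∀ s ∉ A, ∑' J, step s J * V J + 1 ≤ V s) (s0 : S) :
    ∑' t, ∑' s, Aᶜ.indicator (markovDist step s0 t) s ≤ V s0 := by
  set Φ : ℕ → ℝ≥0∞ := fun t => ∑' s, markovDist step s0 t s * V s
  set Ψ : ℕ → ℝ≥0∞ := fun t => ∑' s, Aᶜ.indicator (markovDist step s0 t) s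
  have hdrift : ∀ s, ∑' J, step s J * V J + Aᶜ.indicator 1 s ≤ V s := by
    intro s
    by_cases hs : s ∈ A
    · simpa [hs] using hA s hs
    · simpa [hs] using hAc s hs
  -- `Φ t = 𝔼 V(X t)` drops by at least `Ψ t = ℙ(X t ∉ A)` at every step
  have hstep : ∀ t, Φ (t + 1) + Ψ t ≤ Φ t := by
    intro t
    have hΦ : Φ (t + 1) = ∑' s, markovDist step s0 t s * ∑' J, step s J * V J := by
      simp only [Φ, markovDist_succ_apply, ← ENNReal.tsum_mul_right, ← ENNReal.tsum_mul_left,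
        mul_assoc]
      exact ENNReal.tsum_comm
    have hΨ : Ψ t = ∑' s, markovDist step s0 t s * Aᶜ.indicator 1 s :=
      tsum_congr fun s => by
        by_cases hs : s ∈ A <;> simp [hs]
    rw [hΦ, hΨ, ← ENNReal.tsum_add]
    exact ENNReal.tsum_le_tsum fun s => by
      rw [← mul_add]
      exact mul_le_mul_right (hdrift s) _
  have hpartial : ∀ T, ∑ t ∈ Finset.range T, Ψ t + Φ T ≤ Φ 0 := by
    intro T
    induction T with
    | zero => simp
    | succ T ih =>
      calc ∑ t ∈ Finset.range (T + 1), Ψ t + Φ (T + 1)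
          = ∑ t ∈ Finset.range T, Ψ t + (Φ (T + 1) + Ψ T) := by
            rw [Finset.sum_range_succ]; ring
        _ ≤ ∑ t ∈ Finset.range T, Ψ t + Φ T := by gcongr; exact hstep T
        _ ≤ Φ 0 := ih
  have hΦ0 : Φ 0 = V s0 := by simp [Φ, markovDist]
  rw [← hΦ0, ENNReal.tsum_eq_iSup_nat]
  exact iSup_le fun T => le_self_add.trans (hpartial T)

theorem tsum_one_sub_markovDist_le_of_drift (hstep : ∀ s, ∑' J, step s J = 1) {a : S}
    {V : S → ℝ≥0∞} (ha : ∑' J, step a J * V J ≤ V a)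
    (hV : ∀ s, s ≠ a → ∑' J, step s J * V J + 1 ≤ V s) (s0 : S) :
    ∑' t, (1 - markovDist step s0 t a) ≤ V s0 := by
  refine le_trans (ENNReal.tsum_le_tsum fun t => ?_)
    (tsum_indicator_markovDist_le_of_drift (A := {a}) (by simpa using ha) hV s0)
  rw [tsub_le_iff_left, ← tsum_markovDist_eq_one hstep s0 t,
    ENNReal.tsum_eq_add_tsum_ite a]
  gcongr with s
  by_cases hs : s = a <;> simp [hs]

end Markov

section Clique

variable {n : ℕ} {lam alpha : ℝ}

noncomputable def cliqueRate (n : ℕ) (lam alpha : ℝ) (I : ℕ) : ℝ :=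
  lam * (I : ℝ) ^ (1 + alpha) * ((n : ℝ) - I)

theorem cliqueRate_nonneg (hlam : 0 ≤ lam) {I : ℕ} (hI : I ≤ n) :
    0 ≤ cliqueRate n lam alpha I := by
  have : (I : ℝ) ≤ n := by exact_mod_cast hI
  unfold cliqueRate
  have := Real.rpow_nonneg (Nat.cast_nonneg I) (1 + alpha)
  have : (0 : ℝ) ≤ n - I := by linarith
  positivity

theorem cliqueRate_le (hlam : 0 ≤ lam) (halpha : 0 ≤ alpha) {I : ℕ} (hI : I ≤ n) :
    cliqueRate n lam alpha I ≤ I * (lam * (n : ℝ) ^ (1 + alpha)) := by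
  have hIn : (I : ℝ) ≤ n := by exact_mod_cast hI
  have hpow : ∀ x : ℝ, 0 ≤ x → x ^ (1 + alpha) = x * x ^ alpha := fun x hx => by
    rw [Real.rpow_add' hx (by linarith), Real.rpow_one]
  have hmono : (I : ℝ) ^ alpha ≤ (n : ℝ) ^ alpha :=
    Real.rpow_le_rpow (by positivity) hIn halpha
  have : 0 ≤ (I : ℝ) ^ alpha := by positivity
  rw [cliqueRate, hpow _ (by positivity), hpow _ (by positivity)]
  have : lam * I * I ^ alpha * (n - I) ≤ lam * I * n ^ alpha * n := by
    gcongr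
    linarith
  linarith

theorem cliqueStep_of_absorbing {I : ℕ} (h : I = 0 ∨ n < I) :
    cliqueStep n lam alpha I = fun J => if J = I then 1 else 0 := by
  rw [cliqueStep, if_pos h]

theorem cliqueStep_of_le {I : ℕ} (h1 : 1 ≤ I) (h2 : I ≤ n) :
    cliqueStep n lam alpha I = fun J =>
      if J = I + 1 then
        ENNReal.ofReal (cliqueRate n lam alpha I / (cliqueRate n lam alpha I + I))
      else if J = I - 1 then ENNReal.ofReal (I / (cliqueRate n lam alpha I + I)) else 0 := by
  rw [cliqueStep, if_neg (by omega)]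
  rfl

theorem tsum_cliqueStep (hlam : 0 ≤ lam) (I : ℕ) : ∑' J, cliqueStep n lam alpha I J = 1 := by
  by_cases h : I = 0 ∨ n < I
  · simp [cliqueStep_of_absorbing h]
  · have h1 : 1 ≤ I := by omega
    have h2 : I ≤ n := by omega
    have hb := cliqueRate_nonneg (alpha := alpha) hlam h2
    have hI : (1 : ℝ) ≤ I := by exact_mod_cast h1
    rw [cliqueStep_of_le h1 h2, (hasSum_ite_ite_eq (by omega) _ _).tsum_eq,
      ← ENNReal.ofReal_add (by positivity) (by positivity), ← add_div,
      div_self (by positivity), ENNReal.ofReal_one]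

/-- The expected time for the chain to move from `I` down to `I - 1`. -/
noncomputable def cliqueDescentTime (n : ℕ) (lam alpha : ℝ) (I : ℕ) : ℝ :=
  if I ≤ n then
    (cliqueRate n lam alpha I + I
      + cliqueRate n lam alpha I * cliqueDescentTime n lam alpha (I + 1)) / I
  else 0
termination_by n + 1 - I

theorem cliqueDescentTime_of_lt {I : ℕ} (h : n < I) : cliqueDescentTime n lam alpha I = 0 := by
  rw [cliqueDescentTime, if_neg (by omega)]

theorem natCast_mul_cliqueDescentTime {I : ℕ} (h1 : 1 ≤ I) (h2 : I ≤ n) :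
    I * cliqueDescentTime n lam alpha I = cliqueRate n lam alpha I + I
      + cliqueRate n lam alpha I * cliqueDescentTime n lam alpha (I + 1) := by
  have : (I : ℝ) ≠ 0 := by positivity
  rw [cliqueDescentTime, if_pos h2]
  field_simp

theorem cliqueDescentTime_nonneg (hlam : 0 ≤ lam) (I : ℕ) :
    0 ≤ cliqueDescentTime n lam alpha I := by
  induction I using cliqueDescentTime.induct n with
  | case1 I hI ih =>
    rw [cliqueDescentTime, if_pos hI]
    have := cliqueRate_nonneg (alpha := alpha) hlam hI
    positivity
  | case2 I hI => rw [cliqueDescentTime_of_lt (by omega)]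

theorem cliqueDescentTime_le_three (hlam : 0 ≤ lam)
    (hrate : ∀ I, 1 ≤ I → I ≤ n → cliqueRate n lam alpha I ≤ I / 2) (I : ℕ) :
    cliqueDescentTime n lam alpha I ≤ 3 := by
  induction I using cliqueDescentTime.induct n with
  | case1 I hI ih =>
    rcases Nat.eq_zero_or_pos I with rfl | h1
    · rw [cliqueDescentTime, if_pos hI, Nat.cast_zero, div_zero]
      norm_num
    have hpos : (0 : ℝ) < I := by exact_mod_cast h1
    have hb := hrate I h1 hI
    have hb0 := cliqueRate_nonneg (alpha := alpha) hlam hI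
    have hrec := natCast_mul_cliqueDescentTime (lam := lam) (alpha := alpha) h1 hI
    have : cliqueRate n lam alpha I * cliqueDescentTime n lam alpha (I + 1)
        ≤ cliqueRate n lam alpha I * 3 := mul_le_mul_of_nonneg_left ih hb0
    nlinarith
  | case2 I hI => rw [cliqueDescentTime_of_lt (by omega)]; norm_num

noncomputable def cliqueAbsorptionTime (n : ℕ) (lam alpha : ℝ) (J : ℕ) : ℝ :=
  ∑ k ∈ Finset.Icc 1 J, cliqueDescentTime n lam alpha k

theorem cliqueAbsorptionTime_succ (J : ℕ) :
    cliqueAbsorptionTime n lam alpha (J + 1)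
      = cliqueAbsorptionTime n lam alpha J + cliqueDescentTime n lam alpha (J + 1) :=
  Finset.sum_Icc_succ_top (by omega) _

theorem cliqueAbsorptionTime_nonneg (hlam : 0 ≤ lam) (J : ℕ) :
    0 ≤ cliqueAbsorptionTime n lam alpha J :=
  Finset.sum_nonneg fun k _ => cliqueDescentTime_nonneg hlam k

theorem cliqueAbsorptionTime_drift (hlam : 0 ≤ lam) {I : ℕ} (h1 : 1 ≤ I) (h2 : I ≤ n) :
    cliqueRate n lam alpha I / (cliqueRate n lam alpha I + I)
        * cliqueAbsorptionTime n lam alpha (I + 1)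
      + I / (cliqueRate n lam alpha I + I) * cliqueAbsorptionTime n lam alpha (I - 1) + 1
      = cliqueAbsorptionTime n lam alpha I := by
  have hden : cliqueRate n lam alpha I + I ≠ 0 := by
    have := cliqueRate_nonneg (alpha := alpha) hlam h2
    have : (1 : ℝ) ≤ I := by exact_mod_cast h1
    positivity
  have hup := cliqueAbsorptionTime_succ (n := n) (lam := lam) (alpha := alpha) I
  have hdown := cliqueAbsorptionTime_succ (n := n) (lam := lam) (alpha := alpha) (I - 1)
  rw [Nat.sub_add_cancel h1] at hdown
  have hrec := natCast_mul_cliqueDescentTime (lam := lam) (alpha := alpha) h1 h2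
  field_simp
  linear_combination cliqueRate n lam alpha I * hup - I * hdown - hrec

/-- Infinite above `n`, where the chain never goes, so that the drift condition holds there
trivially. -/
noncomputable def cliquePotential (n : ℕ) (lam alpha : ℝ) (J : ℕ) : ℝ≥0∞ :=
  if J ≤ n then ENNReal.ofReal (cliqueAbsorptionTime n lam alpha J) else ⊤

theorem tsum_cliqueStep_mul_cliquePotential_add_one (hlam : 0 ≤ lam) {I : ℕ} (h1 : 1 ≤ I)
    (h2 : I ≤ n) :
    ∑' J, cliqueStep n lam alpha I J * cliquePotential n lam alpha J + 1
      = cliquePotential n lam alpha I := by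
  set b := cliqueRate n lam alpha I
  have hb : 0 ≤ b := cliqueRate_nonneg hlam h2
  have hpu : 0 ≤ b / (b + I) := by positivity
  have hpd : 0 ≤ (I : ℝ) / (b + I) := by positivity
  have hW := cliqueAbsorptionTime_nonneg (n := n) (alpha := alpha) hlam
  -- at `I = n` the potential jumps to `⊤`, but the up-probability vanishes there
  have hup : ENNReal.ofReal (b / (b + I)) * cliquePotential n lam alpha (I + 1)
      = ENNReal.ofReal (b / (b + I) * cliqueAbsorptionTime n lam alpha (I + 1)) := by
    rcases h2.lt_or_eq with h | rfl
    · rw [cliquePotential, if_pos (by omega), ENNReal.ofReal_mul hpu]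
    · simp [b, cliqueRate]
  have hterm : ∀ J, cliqueStep n lam alpha I J * cliquePotential n lam alpha J
      = if J = I + 1 then ENNReal.ofReal (b / (b + I)) * cliquePotential n lam alpha (I + 1)
        else if J = I - 1 then ENNReal.ofReal (I / (b + I)) * cliquePotential n lam alpha (I - 1)
        else 0 := by
    intro J
    rw [cliqueStep_of_le h1 h2]
    by_cases hJ : J = I + 1
    · simp [hJ, b]
    by_cases hJ' : J = I - 1
    · simp [hJ', b, show I - 1 ≠ I + 1 by omega]
    simp [hJ, hJ']
  rw [tsum_congr hterm, (hasSum_ite_ite_eq (by omega) _ _).tsum_eq, hup, cliquePotential,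
    if_pos (by omega), ← ENNReal.ofReal_mul hpd,
    ← ENNReal.ofReal_add (mul_nonneg hpu (hW _)) (mul_nonneg hpd (hW _)),
    ← ENNReal.ofReal_one,
    ← ENNReal.ofReal_add (add_nonneg (mul_nonneg hpu (hW _)) (mul_nonneg hpd (hW _))) zero_le_one,
    cliqueAbsorptionTime_drift hlam h1 h2, cliquePotential, if_pos h2]

theorem cliqueET_le_cliqueDescentTime (hlam : 0 ≤ lam) (hn : 1 ≤ n) :
    cliqueET n lam alpha 1 ≤ ENNReal.ofReal (cliqueDescentTime n lam alpha 1) := by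
  have hV1 :
      cliquePotential n lam alpha 1 = ENNReal.ofReal (cliqueDescentTime n lam alpha 1) := by
    simp [cliquePotential, hn, cliqueAbsorptionTime]
  refine hV1 ▸ tsum_one_sub_markovDist_le_of_drift (tsum_cliqueStep hlam) ?_ (fun I hI => ?_) 1
  · rw [tsum_eq_single 0 fun J hJ => by simp [cliqueStep_of_absorbing (Or.inl rfl), hJ]]
    simp [cliqueStep_of_absorbing (Or.inl rfl)]
  · by_cases h2 : I ≤ n
    · exact (tsum_cliqueStep_mul_cliquePotential_add_one hlam (by omega) h2).le
    · simp [cliquePotential, h2]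

end Clique

/-- For super-linear scaling with λ ∈ o(n^{-1-α}), the expected survival
time of the clique infection chain started at 1 is bounded by a constant. -/
theorem clique_superlinear_survival_upper (alpha : ℝ) (ha : 0 < alpha)
    (lam : ℕ → ℝ) (hpos : ∀ n, 0 < lam n)
    (hcond : Tendsto (fun n : ℕ => lam n * (n : ℝ) ^ (1 + alpha)) atTop (nhds 0)) :
    ∃ C : ℝ, ∀ n : ℕ, 1 ≤ n → cliqueET n (lam n) alpha 1 ≤ ENNReal.ofReal C := by
  have hbounded : ∀ᶠ n in atTop, cliqueDescentTime n (lam n) alpha 1 ≤ 3 := by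
    filter_upwards [hcond.eventually_le_const (by norm_num : (0 : ℝ) < 1 / 2)] with n hn
    refine cliqueDescentTime_le_three (hpos n).le (fun I _ hI => ?_) 1
    have hrate := cliqueRate_le (alpha := alpha) (hpos n).le ha.le hI
    have : (0 : ℝ) ≤ I := Nat.cast_nonneg I
    nlinarith
  obtain ⟨C, hC⟩ := (isBoundedUnder_of_eventually_le hbounded).bddAbove_range
  exact ⟨C, fun n hn => (cliqueET_le_cliqueDescentTime (hpos n).le hn).trans
    (ENNReal.ofReal_le_ofReal (hC ⟨n, rfl⟩))⟩
end
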